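/- Let b̂₁ ∈ (0,1) be the unique solution of 1 = b̂₁²/((1 − b̂₁²)²(1 + b̂₁²)), b̂₂ := 1, Σ̂₀ := Σ₀, Σ̂₁ := Σ̂₀/(1 + b̂₁²), β̂₁ := b̂₁σᵤ/√(Σ̂₀Δ), β̂₂ := b̂₂σᵤ/√(Σ̂₁Δ). Then (β̂₁, β̂₂) lies in the domain of T (all denominators are nonzero) and T(β̂₁, β̂₂) = (β̂₁, β̂₂). -/

import Mathlib

/-- First coordinate of the two-period policy-iteration map. -/
noncomputable def T2p1 (Δ σu Sig0 β1 β2 : ℝ) : ℝ :=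
  (β1 ^ 2 * Δ * Sig0 + σu ^ 2) *
      (β1 * Δ * Sig0 * (β1 - β2) ^ 2 + σu ^ 2 * (β1 - 2 * β2)) /
    (β1 * Δ * Sig0 *
      (β1 * Δ * Sig0 * (β1 ^ 2 - 4 * β1 * β2 + β2 ^ 2) + σu ^ 2 * (β1 - 4 * β2)))

/-- Second coordinate of the two-period policy-iteration map. -/
noncomputable def T2p2 (Δ σu Sig0 β1 β2 : ℝ) : ℝ :=
  (Δ * Sig0 * (β1 ^ 2 + β2 ^ 2) + σu ^ 2) / (2 * β2 * Δ * Sig0)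


/-! The map is homogeneous: writing `β = λ x` with `λ² ΔΣ₀ = σᵤ²` turns `T` into `λ` times the map
with `Δ = σᵤ = Σ₀ = 1`. In these units `β̂ = λ (b̂₁, √(1 + b̂₁²))`, the second coordinate is fixed
because `c² = 1 + b²`, and the first one is fixed exactly when `b = (1 - b²) c`, which is the square
root of the equation defining `b̂₁`. -/

def T2p1Num (Δ σu Sig0 β1 β2 : ℝ) : ℝ :=
  (β1 ^ 2 * Δ * Sig0 + σu ^ 2) * (β1 * Δ * Sig0 * (β1 - β2) ^ 2 + σu ^ 2 * (β1 - 2 * β2))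

def T2p1Denom (Δ σu Sig0 β1 β2 : ℝ) : ℝ :=
  β1 * Δ * Sig0 * (β1 * Δ * Sig0 * (β1 ^ 2 - 4 * β1 * β2 + β2 ^ 2) + σu ^ 2 * (β1 - 4 * β2))

theorem T2p1_eq_num_div_denom (Δ σu Sig0 β1 β2 : ℝ) :
    T2p1 Δ σu Sig0 β1 β2 = T2p1Num Δ σu Sig0 β1 β2 / T2p1Denom Δ σu Sig0 β1 β2 :=
  rfl

section Homogeneity

variable {Δ σu Sig0 l : ℝ} (hl : l ^ 2 * (Δ * Sig0) = σu ^ 2)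
include hl

theorem T2p1Num_mul_left (x1 x2 : ℝ) :
    T2p1Num Δ σu Sig0 (l * x1) (l * x2) = σu ^ 4 * l * T2p1Num 1 1 1 x1 x2 := by
  unfold T2p1Num
  linear_combination
    l * ((l ^ 2 * (Δ * Sig0) * x1 ^ 2 + σu ^ 2) * (x1 * (x1 - x2) ^ 2)
      + x1 ^ 2 * σu ^ 2 * (x1 * (x1 - x2) ^ 2 + (x1 - 2 * x2))) * hl

theorem T2p1Denom_mul_left (x1 x2 : ℝ) :
    T2p1Denom Δ σu Sig0 (l * x1) (l * x2) = σu ^ 4 * T2p1Denom 1 1 1 x1 x2 := by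
  unfold T2p1Denom
  linear_combination
    (x1 * (l ^ 2 * (Δ * Sig0) * x1 * (x1 ^ 2 - 4 * x1 * x2 + x2 ^ 2) + σu ^ 2 * (x1 - 4 * x2))
      + σu ^ 2 * x1 ^ 2 * (x1 ^ 2 - 4 * x1 * x2 + x2 ^ 2)) * hl

theorem T2p1_mul_left (hσ : σu ≠ 0) (x1 x2 : ℝ) :
    T2p1 Δ σu Sig0 (l * x1) (l * x2) = l * T2p1 1 1 1 x1 x2 := by
  rw [T2p1_eq_num_div_denom, T2p1_eq_num_div_denom, T2p1Num_mul_left hl, T2p1Denom_mul_left hl,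
    mul_comm (σu ^ 4) l, mul_assoc, mul_div_assoc, mul_div_mul_left _ _ (pow_ne_zero 4 hσ)]

theorem T2p2_mul_left (hσ : σu ≠ 0) (x1 x2 : ℝ) :
    T2p2 Δ σu Sig0 (l * x1) (l * x2) = l * T2p2 1 1 1 x1 x2 := by
  have hl0 : l ≠ 0 := by rintro rfl; simp [eq_comm, hσ] at hl
  obtain ⟨hΔ, hSig0⟩ : Δ ≠ 0 ∧ Sig0 ≠ 0 :=
    mul_ne_zero_iff.1 (by rintro hk; simp [hk, eq_comm, hσ] at hl)
  unfold T2p2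
  rcases eq_or_ne x2 0 with rfl | hx2
  · simp
  · rw [mul_div_assoc', div_eq_div_iff (by simp [*]) (by simp [*])]
    linear_combination (-2 * x2) * hl

end Homogeneity

section Normalized

variable {b c : ℝ} (hc : c ^ 2 = 1 + b ^ 2)
include hc

theorem T2p1Denom_one_eq : T2p1Denom 1 1 1 b c = 2 * b * (1 + b ^ 2) * (b - 2 * c) := by
  unfold T2p1Denom
  linear_combination b ^ 2 * hc

theorem T2p1Num_one_eq : T2p1Num 1 1 1 b c = 2 * (1 + b ^ 2) ^ 2 * (b - c) := by
  unfold T2p1Num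
  linear_combination (1 + b ^ 2) * b * hc

theorem T2p1Denom_one_ne_zero (hb : 0 < b) (hc0 : 0 < c) : T2p1Denom 1 1 1 b c ≠ 0 := by
  have hbc : b < c := by nlinarith
  rw [T2p1Denom_one_eq hc]
  exact mul_ne_zero (by positivity) (by linarith)

theorem T2p1_one_eq_self (hb : 0 < b) (hc0 : 0 < c) (hkey : b = (1 - b ^ 2) * c) :
    T2p1 1 1 1 b c = b := by
  rw [T2p1_eq_num_div_denom, div_eq_iff (T2p1Denom_one_ne_zero hc hb hc0), T2p1Num_one_eq hc,
    T2p1Denom_one_eq hc]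
  linear_combination (2 * (1 + b ^ 2)) * hkey

theorem T2p2_one_eq_self (hc0 : 0 < c) : T2p2 1 1 1 b c = c := by
  unfold T2p2
  field_simp
  linear_combination -hc

end Normalized

theorem eq_one_sub_sq_mul_sqrt_of_root {b : ℝ} (hb : b ∈ Set.Ioo (0 : ℝ) 1)
    (hroot : 1 = b ^ 2 / ((1 - b ^ 2) ^ 2 * (1 + b ^ 2))) :
    b = (1 - b ^ 2) * Real.sqrt (1 + b ^ 2) := by
  obtain ⟨hb0, hb1⟩ := hb
  have h1b : 0 < 1 - b ^ 2 := by nlinarith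
  have hsq : b ^ 2 = (1 - b ^ 2) ^ 2 * (1 + b ^ 2) := by
    rwa [eq_div_iff (by positivity), one_mul, eq_comm] at hroot
  calc b = Real.sqrt (b ^ 2) := (Real.sqrt_sq hb0.le).symm
    _ = Real.sqrt ((1 - b ^ 2) ^ 2 * (1 + b ^ 2)) := congrArg _ hsq
    _ = (1 - b ^ 2) * Real.sqrt (1 + b ^ 2) := by
      rw [Real.sqrt_mul (by positivity), Real.sqrt_sq h1b.le]

/-- Kyle's two-period equilibrium `(β̂₁, β̂₂)` (built from the unique `b̂₁ ∈ (0,1)`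
with `1 = b̂₁²/((1-b̂₁²)²(1+b̂₁²))`) lies in the domain of `T` (both denominators
are nonzero) and is a fixed point of `T`. -/
theorem two_period_fixed_point (Δ σu Sig0 : ℝ) (hΔ : 0 < Δ) (hσ : 0 < σu)
    (hSig : 0 < Sig0) (b1 : ℝ) (hb1 : b1 ∈ Set.Ioo (0 : ℝ) 1)
    (hb1eq : 1 = b1 ^ 2 / ((1 - b1 ^ 2) ^ 2 * (1 + b1 ^ 2))) :
    let β1 : ℝ := b1 * σu / Real.sqrt (Sig0 * Δ)
    let β2 : ℝ := 1 * σu / Real.sqrt (Sig0 / (1 + b1 ^ 2) * Δ)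
    β1 * Δ * Sig0 *
        (β1 * Δ * Sig0 * (β1 ^ 2 - 4 * β1 * β2 + β2 ^ 2) + σu ^ 2 * (β1 - 4 * β2)) ≠ 0 ∧
    2 * β2 * Δ * Sig0 ≠ 0 ∧
    T2p1 Δ σu Sig0 β1 β2 = β1 ∧ T2p2 Δ σu Sig0 β1 β2 = β2 := by
  intro β1 β2
  set c := Real.sqrt (1 + b1 ^ 2) with hc_def
  set l := σu / Real.sqrt (Sig0 * Δ) with hl_def
  have hk : 0 < Sig0 * Δ := by positivity
  have hl : l ^ 2 * (Δ * Sig0) = σu ^ 2 := by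
    rw [div_pow, Real.sq_sqrt hk.le]
    field_simp
  have hl_pos : 0 < l := div_pos hσ (Real.sqrt_pos.2 hk)
  have hc : c ^ 2 = 1 + b1 ^ 2 := Real.sq_sqrt (by positivity)
  have hc0 : 0 < c := by positivity
  have hβ1 : β1 = l * b1 := by ring
  have hβ2 : β2 = l * c := by
    change 1 * σu / Real.sqrt (Sig0 / (1 + b1 ^ 2) * Δ) = l * c
    rw [show Sig0 / (1 + b1 ^ 2) * Δ = Sig0 * Δ / (1 + b1 ^ 2) by ring,
      Real.sqrt_div hk.le, hl_def, hc_def]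
    field_simp
  rw [hβ1, hβ2]
  refine ⟨?_, by positivity, ?_, ?_⟩
  · change T2p1Denom Δ σu Sig0 (l * b1) (l * c) ≠ 0
    rw [T2p1Denom_mul_left hl]
    exact mul_ne_zero (pow_ne_zero 4 hσ.ne') (T2p1Denom_one_ne_zero hc hb1.1 hc0)
  · rw [T2p1_mul_left hl hσ.ne', T2p1_one_eq_self hc hb1.1 hc0
      (eq_one_sub_sq_mul_sqrt_of_root hb1 hb1eq)]
  · rw [T2p2_mul_left hl hσ.ne', T2p2_one_eq_self hc hc0]
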